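/- arXiv:math/9810174 — 14 statements merged into one kernel-verified Lean document; each statement's English description precedes it below -/
import Mathlib

section
/- A topological space X is locally indiscrete (every open set is closed) if and only if every singleton of X is preopen. -/
open Set Topology

def SemiOpen {X : Type*} [TopologicalSpace X] (A : Set X) : Prop :=
  A ⊆ closure (interior A)

def SemiClosed {X : Type*} [TopologicalSpace X] (A : Set X) : Prop :=
  interior (closure A) ⊆ A

def scl {X : Type*} [TopologicalSpace X] (A : Set X) : Set X :=
  ⋂₀ {S | SemiClosed S ∧ A ⊆ S}

def sker {X : Type*} [TopologicalSpace X] (A : Set X) : Set X :=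
  ⋂₀ {S | SemiOpen S ∧ A ⊆ S}

def sint {X : Type*} [TopologicalSpace X] (A : Set X) : Set X :=
  ⋃₀ {S | SemiOpen S ∧ S ⊆ A}

def SgOpen {X : Type*} [TopologicalSpace X] (A : Set X) : Prop :=
  ∀ F : Set X, SemiClosed F → F ⊆ A → F ⊆ sint A

def SgClosed {X : Type*} [TopologicalSpace X] (A : Set X) : Prop :=
  scl A ⊆ sker A

def HSgClosed {X : Type*} [TopologicalSpace X] (A : Set X) : Prop :=
  ∀ B : Set X, B ⊆ A → SgClosed B

def SgCompact (X : Type*) [TopologicalSpace X] : Prop :=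
  ∀ 𝒰 : Set (Set X), (∀ U ∈ 𝒰, SgOpen U) → ⋃₀ 𝒰 = Set.univ →
    ∃ F ⊆ 𝒰, F.Finite ∧ ⋃₀ F = Set.univ

def LocallyIndiscrete (X : Type*) [TopologicalSpace X] : Prop :=
  ∀ U : Set X, IsOpen U → IsClosed U

def IndiscreteSpace (X : Type*) [TopologicalSpace X] : Prop :=
  ∀ U : Set X, IsOpen U → U = ∅ ∨ U = Set.univ

theorem stmt_1 {X : Type*} [TopologicalSpace X] :
    LocallyIndiscrete X ↔ ∀ x : X, ({x} : Set X) ⊆ interior (closure {x}) := by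
  constructor
  · intro h x
    have hcl : IsClosed (closure ({x} : Set X)) := isClosed_closure
    have hop : IsOpen (closure ({x} : Set X)) := by
      have := h (closure ({x} : Set X))ᶜ hcl.isOpen_compl
      simpa using this.isOpen_compl
    rw [hop.interior_eq]
    exact subset_closure
  · intro h U hU
    rw [← closure_subset_iff_isClosed]
    intro x hx
    have hxo : x ∈ interior (closure ({x} : Set X)) := h x rfl
    obtain ⟨y, hyU, hyV⟩ : (U ∩ interior (closure ({x} : Set X))).Nonempty := by
      rw [Set.inter_comm]
      exact mem_closure_iff.mp hx _ isOpen_interior hxo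
    have : y ∈ closure ({x} : Set X) := interior_subset hyV
    have := mem_closure_iff.mp this U hU hyU
    simpa using this
end

section
/- If f : X → Y is an open continuous surjection, then the image under f of every semi-open subset of X is semi-open in Y. -/
open Set Topology

theorem SemiOpen.image {X Y : Type*} [TopologicalSpace X] [TopologicalSpace Y] {f : X → Y}
    (hopen : IsOpenMap f) (hcont : Continuous f) {A : Set X} (hA : SemiOpen A) :
    SemiOpen (f '' A) :=
  calc f '' A ⊆ f '' closure (interior A) := image_mono hA
    _ ⊆ closure (f '' interior A) := image_closure_subset_closure_image hcont
    _ ⊆ closure (interior (f '' A)) := closure_mono (hopen.image_interior_subset A)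

theorem stmt_2_general {X Y : Type*} [TopologicalSpace X] [TopologicalSpace Y] (f : X → Y)
    (hopen : IsOpenMap f) (hcont : Continuous f)
    (A : Set X) (hA : SemiOpen A) : SemiOpen (f '' A) :=
  hA.image hopen hcont

theorem stmt_2 {X Y : Type*} [TopologicalSpace X] [TopologicalSpace Y] (f : X → Y)
    (hopen : IsOpenMap f) (hcont : Continuous f) (hsurj : Function.Surjective f)
    (A : Set X) (hA : SemiOpen A) : SemiOpen (f '' A) :=
  stmt_2_general f hopen hcont A hA
end

section
/- Let X and Y be topological spaces and let A ⊆ X, B ⊆ Y be nonempty. Then A × B is preopen in X × Y if and only if A is preopen in X and B is preopen in Y. -/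
open Set Topology

theorem stmt_4 {X Y : Type*} [TopologicalSpace X] [TopologicalSpace Y]
    (A : Set X) (B : Set Y) (hA : A.Nonempty) (hB : B.Nonempty) :
    (A ×ˢ B ⊆ interior (closure (A ×ˢ B))) ↔
      (A ⊆ interior (closure A)) ∧ (B ⊆ interior (closure B)) := by
  rw [closure_prod_eq, interior_prod_eq, prod_subset_prod_iff]
  constructor
  · rintro (h | h | h)
    · exact h
    · exact absurd h (by simp [hA.ne_empty])
    · exact absurd h (by simp [hB.ne_empty])
  · exact Or.inl
end

section
/- Let X and Y be topological spaces and let A ⊆ X, B ⊆ Y be nonempty. Then A × B is semi-open in X × Y if and only if A is semi-open in X and B is semi-open in Y. -/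
open Set Topology

theorem stmt_5 {X Y : Type*} [TopologicalSpace X] [TopologicalSpace Y]
    (A : Set X) (B : Set Y) (hA : A.Nonempty) (hB : B.Nonempty) :
    SemiOpen (A ×ˢ B) ↔ SemiOpen A ∧ SemiOpen B := by
  unfold SemiOpen
  rw [interior_prod_eq, closure_prod_eq]
  constructor
  · intro h
    obtain ⟨a, ha⟩ := hA
    obtain ⟨b, hb⟩ := hB
    constructor
    · intro x hx
      exact (h (Set.mk_mem_prod hx hb)).1
    · intro y hy
      exact (h (Set.mk_mem_prod ha hy)).2
  · rintro ⟨h1, h2⟩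
    exact Set.prod_mono h1 h2
end

section
/- A subset A of a topological space X is hereditarily sg-closed if and only if int(cl(A)) contains no point x with {x} nowhere dense, i.e., N(X) ∩ int(cl(A)) = ∅, where N(X) is the set of points of X whose singleton is nowhere dense. -/
open Set Topology

lemma subset_sker {X : Type*} [TopologicalSpace X] (A : Set X) : A ⊆ sker A :=
  Set.subset_sInter (fun _ hS => hS.2)

lemma icl_subset_scl {X : Type*} [TopologicalSpace X] (A : Set X) :
    interior (closure A) ⊆ scl A :=
  Set.subset_sInter (fun S hS => ((interior_mono (closure_mono hS.2)).trans hS.1))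

lemma scl_subset_union {X : Type*} [TopologicalSpace X] (A : Set X) :
    scl A ⊆ A ∪ interior (closure A) := by
  apply Set.sInter_subset_of_mem
  refine ⟨?_, Set.subset_union_left⟩
  intro x hx
  have hcl : closure (A ∪ interior (closure A)) = closure A := by
    apply subset_antisymm
    · rw [closure_union]
      exact Set.union_subset subset_rfl
        ((closure_mono interior_subset).trans (by rw [closure_closure]))
    · exact closure_mono Set.subset_union_left
  rw [hcl] at hx
  exact Or.inr hx

lemma semiOpen_compl_singleton {X : Type*} [TopologicalSpace X] {x : X}
    (h : interior (closure ({x} : Set X)) = ∅) : SemiOpen ({x}ᶜ : Set X) := by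
  intro y _
  have : closure (interior ({x}ᶜ : Set X)) = Set.univ := by
    rw [interior_compl, closure_compl, h, Set.compl_empty]
  rw [this]; trivial

lemma icl_diff_singleton {X : Type*} [TopologicalSpace X] {x : X} (A : Set X)
    (h : interior (closure ({x} : Set X)) = ∅) :
    interior (closure A) ⊆ interior (closure (A \ {x})) := by
  apply interior_maximal _ isOpen_interior
  intro u hu
  by_contra hn
  set W : Set X := interior (closure A) ∩ (closure (A \ {x}))ᶜ with hW
  have hWopen : IsOpen W := isOpen_interior.inter (isClosed_closure.isOpen_compl)
  have hWsub : W ⊆ closure ({x} : Set X) := by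
    intro w hw
    have hwA : w ∈ closure A := interior_subset hw.1
    have : closure A ⊆ closure (A \ {x}) ∪ closure ({x} : Set X) := by
      rw [← closure_union]
      exact closure_mono (fun a ha => by
        by_cases hax : a = x
        · exact Or.inr (by simp [hax])
        · exact Or.inl ⟨ha, hax⟩)
    rcases this hwA with h1 | h1
    · exact absurd h1 hw.2
    · exact h1
  have : W ⊆ interior (closure ({x} : Set X)) := interior_maximal hWsub hWopen
  rw [h] at this
  exact this ⟨hu, hn⟩

theorem stmt_6 {X : Type*} [TopologicalSpace X] (A : Set X) :
    HSgClosed A ↔ {x : X | interior (closure ({x} : Set X)) = ∅} ∩ interior (closure A) = ∅ := by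
  constructor
  · intro h
    rw [Set.eq_empty_iff_forall_notMem]
    rintro x ⟨hxN, hxA⟩
    have hxN : interior (closure ({x} : Set X)) = ∅ := hxN
    set B : Set X := A \ {x} with hB
    have hsg : SgClosed B := h B Set.diff_subset
    have hx_scl : x ∈ scl B :=
      icl_subset_scl B (icl_diff_singleton A hxN hxA)
    have hx_sker : x ∈ sker B := hsg hx_scl
    have : x ∈ ({x}ᶜ : Set X) :=
      hx_sker _ ⟨semiOpen_compl_singleton hxN, fun a ha => ha.2⟩
    exact this rfl
  · intro h B hBA
    intro x hx
    rcases scl_subset_union B hx with hxB | hxI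
    · exact subset_sker B hxB
    · -- x ∈ interior (closure B); show x in every semi-open superset S of B
      have hxA : x ∈ interior (closure A) :=
        interior_mono (closure_mono hBA) hxI
      have hxN : interior (closure ({x} : Set X)) ≠ ∅ := by
        intro he
        have : x ∈ ({x : X | interior (closure ({x} : Set X)) = ∅} ∩ interior (closure A)) :=
          ⟨he, hxA⟩
        rw [h] at this; exact this
      rintro S ⟨hSso, hBS⟩
      -- V = int cl {x} ⊆ int cl B
      have hVsub : interior (closure ({x} : Set X)) ⊆ interior (closure B) := by
        apply interior_mono
        apply closure_minimal _ isClosed_closure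
        intro a ha
        rw [Set.mem_singleton_iff] at ha
        subst ha
        exact interior_subset hxI
      obtain ⟨v, hv⟩ := Set.nonempty_iff_ne_empty.mpr hxN
      have hvclS : v ∈ closure (interior S) := by
        have : interior (closure ({x} : Set X)) ⊆ closure (interior S) := by
          refine hVsub.trans (interior_subset.trans (closure_mono hBS |>.trans ?_))
          calc closure S ⊆ closure (closure (interior S)) := closure_mono hSso
            _ = closure (interior S) := closure_closure
        exact this hv
      obtain ⟨y, hyV, hyS⟩ :=
        mem_closure_iff.mp hvclS _ isOpen_interior hv
      have hycl : y ∈ closure ({x} : Set X) := interior_subset hyV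
      obtain ⟨z, hzS, hz⟩ := mem_closure_iff.mp hycl _ isOpen_interior hyS
      rw [Set.mem_singleton_iff] at hz
      subst hz
      exact interior_subset hzS
end

section
/- Every nowhere dense subset of a topological space is hereditarily sg-closed. -/
open Set Topology

theorem stmt_7 {X : Type*} [TopologicalSpace X] (A : Set X)
    (hA : interior (closure A) = ∅) : HSgClosed A := by
  intro B hB
  have hBnd : interior (closure B) = ∅ := by
    have : interior (closure B) ⊆ interior (closure A) :=
      interior_mono (closure_mono hB)
    rw [hA] at this
    exact subset_empty_iff.mp this
  have hsc : SemiClosed B := by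
    intro x hx
    rw [hBnd] at hx
    exact absurd hx (notMem_empty x)
  intro x hx
  have hxB : x ∈ B := hx B ⟨hsc, subset_rfl⟩
  intro S hS
  exact hS.2 hxB
end

section
/- Let (X_i)_{i∈I} be a family of nonempty topological spaces. If infinitely many X_i are not indiscrete, then the product ∏ X_i contains an infinite nowhere dense subset. -/
open Set Topology

theorem stmt_10 {I : Type*} (X : I → Type*) [∀ i, TopologicalSpace (X i)]
    [∀ i, Nonempty (X i)]
    (h : {i : I | ¬ IndiscreteSpace (X i)}.Infinite) :
    ∃ A : Set (∀ i, X i), A.Infinite ∧ interior (closure A) = ∅ := by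
  classical
  set S := {i : I | ¬ IndiscreteSpace (X i)} with hS
  have key : ∀ i ∈ S, ∃ (U : Set (X i)) (a b : X i), IsOpen U ∧ a ∈ U ∧ b ∉ U := by
    intro i hi
    simp only [hS, mem_setOf_eq, IndiscreteSpace] at hi
    push_neg at hi
    obtain ⟨U, hUo, hne, hnu⟩ := hi
    obtain ⟨a, ha⟩ := hne
    obtain ⟨b, hb⟩ : Uᶜ.Nonempty := by
      rw [← nonempty_compl] at hnu; exact hnu
    exact ⟨U, a, b, hUo, ha, hb⟩
  choose! U a b hUo ha hb using key
  set g : ∀ i, X i := fun i => b i with hg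
  set φ : I → ∀ i, X i := fun i₀ => Function.update g i₀ (a i₀) with hφ
  set A : Set (∀ i, X i) := φ '' S with hA
  set C : Set (∀ i, X i) :=
    {f | ∀ i ∈ S, ∀ j ∈ S, i ≠ j → f i ∉ U i ∨ f j ∉ U j} with hC
  -- A is infinite
  have hinj : Set.InjOn φ S := by
    intro i hi j hj hij
    by_contra hne
    have h1 : φ i i = a i := by simp [hφ]
    have h2 : φ j i = g i := Function.update_of_ne hne _ _
    rw [hij] at h1
    rw [h1] at h2
    exact hb i hi (h2 ▸ ha i hi : g i ∈ U i)
  have hAinf : A.Infinite := Set.Infinite.image hinj h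
  -- A ⊆ C
  have hAC : A ⊆ C := by
    rintro f ⟨i₀, hi₀, rfl⟩
    intro i hi j hj hij
    rcases eq_or_ne i i₀ with rfl | hne
    · right
      have : φ i j = g j := Function.update_of_ne hij.symm _ _
      rw [this]; exact hb j hj
    · left
      have : φ i₀ i = g i := Function.update_of_ne hne _ _
      rw [this]; exact hb i hi
  -- C is closed
  have hCclosed : IsClosed C := by
    have : C = ⋂ i, ⋂ j, ⋂ (_ : i ∈ S ∧ j ∈ S ∧ i ≠ j),
        ({f : ∀ i, X i | f i ∉ U i} ∪ {f : ∀ i, X i | f j ∉ U j}) := by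
      ext f
      simp only [hC, mem_setOf_eq, mem_iInter, mem_union]
      constructor
      · rintro hf i j ⟨hi, hj, hij⟩; exact hf i hi j hj hij
      · intro hf i hi j hj hij; exact hf i j ⟨hi, hj, hij⟩
    rw [this]
    refine isClosed_iInter fun i => isClosed_iInter fun j => isClosed_iInter ?_
    rintro ⟨hi, hj, hij⟩
    refine IsClosed.union ?_ ?_
    · have : {f : ∀ i, X i | f i ∉ U i} = ((fun f : ∀ i, X i => f i) ⁻¹' (U i))ᶜ := rfl
      rw [this]
      exact (IsOpen.preimage (continuous_apply i) (hUo i hi)).isClosed_compl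
    · have : {f : ∀ i, X i | f j ∉ U j} = ((fun f : ∀ i, X i => f j) ⁻¹' (U j))ᶜ := rfl
      rw [this]
      exact (IsOpen.preimage (continuous_apply j) (hUo j hj)).isClosed_compl
  -- interior C is empty
  have hintC : interior C = ∅ := by
    rw [eq_empty_iff_forall_notMem]
    intro x hx
    obtain ⟨t, u, hu, hsub⟩ := isOpen_pi_iff.mp isOpen_interior x hx
    have hdiff : (S \ ↑t).Infinite := h.diff t.finite_toSet
    obtain ⟨i, hi⟩ := hdiff.nonempty
    obtain ⟨j, hj⟩ := (hdiff.diff (finite_singleton i)).nonempty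
    have hij : j ≠ i := by
      intro e; exact hj.2 (e ▸ mem_singleton i)
    set y : ∀ i, X i := Function.update (Function.update x i (a i)) j (a j) with hy
    have hyt : y ∈ (↑t : Set I).pi u := by
      intro k hk
      have hki : k ≠ i := fun e => hi.2 (e ▸ hk)
      have hkj : k ≠ j := fun e => (hj.1).2 (e ▸ hk)
      have : y k = x k := by
        rw [hy, Function.update_of_ne hkj, Function.update_of_ne hki]
      rw [this]
      exact (hu k hk).2
    have hyC : y ∈ C := interior_subset (hsub hyt)
    have hyi : y i = a i := by
      rw [hy, Function.update_of_ne (Ne.symm hij)]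
      simp
    have hyj : y j = a j := by rw [hy]; simp
    rcases hyC i hi.1 j (hj.1).1 (Ne.symm hij) with h1 | h2
    · exact h1 (hyi ▸ ha i hi.1)
    · exact h2 (hyj ▸ ha j (hj.1).1)
  refine ⟨A, hAinf, ?_⟩
  have : closure A ⊆ C := closure_minimal hAC hCclosed
  exact eq_empty_of_subset_empty (hintC ▸ interior_mono this)
end

section
/- If a product ∏_{i∈I} X_i of nonempty topological spaces is sg-compact, then only finitely many of the factor spaces X_i are not indiscrete. -/
open Set Topology

theorem stmt_11 {I : Type*} (X : I → Type*) [∀ i, TopologicalSpace (X i)]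
    [∀ i, Nonempty (X i)]
    (h : SgCompact (∀ i, X i)) :
    {i : I | ¬ IndiscreteSpace (X i)}.Finite := by
  classical
  by_contra hfin
  set B := {i : I | ¬ IndiscreteSpace (X i)} with hBdef
  have hinf : B.Infinite := hfin
  -- choose proper nonempty open sets in bad factors
  have hU : ∀ i, ∃ U : Set (X i), i ∈ B → IsOpen U ∧ U.Nonempty ∧ Uᶜ.Nonempty := by
    intro i
    by_cases hi : i ∈ B
    · have h' : ¬ IndiscreteSpace (X i) := hi
      rw [IndiscreteSpace] at h'
      push_neg at h'
      obtain ⟨U, hUo, hUne, hUnu⟩ := h'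
      refine ⟨U, fun _ => ⟨hUo, hUne, ?_⟩⟩
      rwa [Set.nonempty_compl]
    · exact ⟨∅, fun h' => absurd h' hi⟩
  choose U hUprop using hU
  have hu : ∀ i, ∃ x : X i, i ∈ B → x ∈ U i := by
    intro i
    by_cases hi : i ∈ B
    · obtain ⟨x, hx⟩ := (hUprop i hi).2.1
      exact ⟨x, fun _ => hx⟩
    · exact ⟨Classical.arbitrary _, fun h' => absurd h' hi⟩
  have ha : ∀ i, ∃ x : X i, i ∈ B → x ∉ U i := by
    intro i
    by_cases hi : i ∈ B
    · obtain ⟨x, hx⟩ := (hUprop i hi).2.2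
      exact ⟨x, fun _ => hx⟩
    · exact ⟨Classical.arbitrary _, fun h' => absurd h' hi⟩
  choose u hu using hu
  choose a ha using ha
  set z : I → (∀ i, X i) := fun j => Function.update a j (u j) with hzdef
  set A : Set (∀ i, X i) :=
    {x | ∀ k ∈ B, ∀ l ∈ B, k ≠ l → x k ∉ U k ∨ x l ∉ U l} with hAdef
  set Z : Set (∀ i, X i) := z '' B with hZdef
  -- every z i is in A
  have hzA : ∀ i ∈ B, z i ∈ A := by
    intro i hi k hk l hl hkl
    by_cases hki : k = i
    · subst hki
      right
      have hli : l ≠ k := fun e => hkl e.symm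
      rw [hzdef]
      simp only [Function.update_of_ne hli]
      exact ha l hl
    · left
      rw [hzdef]
      simp only [Function.update_of_ne hki]
      exact ha k hk
  have hZA : Z ⊆ A := by
    rintro _ ⟨i, hi, rfl⟩
    exact hzA i hi
  -- A is closed
  have hAclosed : IsClosed A := by
    have hrw : A = ⋂ k, ⋂ l,
        {x : ∀ i, X i | k ∈ B → l ∈ B → k ≠ l → x k ∉ U k ∨ x l ∉ U l} := by
      ext x
      simp only [hAdef, Set.mem_setOf_eq, Set.mem_iInter]
      exact ⟨fun hx k l hk hl hkl => hx k hk l hl hkl,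
        fun hx k hk l hl hkl => hx k l hk hl hkl⟩
    rw [hrw]
    refine isClosed_iInter fun k => isClosed_iInter fun l => ?_
    by_cases hk : k ∈ B
    · by_cases hl : l ∈ B
      · by_cases hkl : k = l
        · have : {x : ∀ i, X i | k ∈ B → l ∈ B → k ≠ l → x k ∉ U k ∨ x l ∉ U l}
              = Set.univ := by
            ext x; simp [hkl]
          rw [this]; exact isClosed_univ
        · have : {x : ∀ i, X i | k ∈ B → l ∈ B → k ≠ l → x k ∉ U k ∨ x l ∉ U l}
              = ((fun x : ∀ i, X i => x k) ⁻¹' (U k))ᶜ ∪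
                ((fun x : ∀ i, X i => x l) ⁻¹' (U l))ᶜ := by
            ext x; simp [hk, hl, hkl]
          rw [this]
          exact IsClosed.union
            (((hUprop k hk).1.preimage (continuous_apply k)).isClosed_compl)
            (((hUprop l hl).1.preimage (continuous_apply l)).isClosed_compl)
      · have : {x : ∀ i, X i | k ∈ B → l ∈ B → k ≠ l → x k ∉ U k ∨ x l ∉ U l}
            = Set.univ := by
          ext x; simp [hl]
        rw [this]; exact isClosed_univ
    · have : {x : ∀ i, X i | k ∈ B → l ∈ B → k ≠ l → x k ∉ U k ∨ x l ∉ U l}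
          = Set.univ := by
        ext x; simp [hk]
      rw [this]; exact isClosed_univ
  -- A has empty interior
  have hintA : interior A = ∅ := by
    by_contra hne
    obtain ⟨x, hx⟩ := Set.nonempty_iff_ne_empty.mpr hne
    obtain ⟨F, v, hv, hsub⟩ := isOpen_pi_iff.mp isOpen_interior x hx
    have hsubA : (F : Set I).pi v ⊆ A := hsub.trans interior_subset
    obtain ⟨i, hiB, hiF⟩ := (hinf.diff F.finite_toSet).nonempty
    obtain ⟨j, hjB, hjF⟩ := (hinf.diff (F.finite_toSet.insert i)).nonempty
    have hij : i ≠ j := fun e => hjF (by rw [← e]; exact Set.mem_insert i _)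
    set y : ∀ i, X i := Function.update (Function.update x i (u i)) j (u j) with hydef
    have hy : y ∈ (F : Set I).pi v := by
      intro k hk
      have hki : k ≠ i := fun e => hiF (e ▸ hk)
      have hkj : k ≠ j := fun e => hjF (Set.mem_insert_iff.mpr (Or.inr (e ▸ hk)))
      rw [hydef]
      simp only [Function.update_of_ne hkj, Function.update_of_ne hki]
      exact (hv k hk).2
    have hyA := hsubA hy i hiB j hjB hij
    have hyi : y i = u i := by
      rw [hydef]
      simp only [Function.update_of_ne hij, Function.update_self]
    have hyj : y j = u j := by
      rw [hydef]; simp only [Function.update_self]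
    rcases hyA with h1 | h1
    · exact h1 (hyi ▸ hu i hiB)
    · exact h1 (hyj ▸ hu j hjB)
  -- complements of subsets of A are semi-open
  have hSemi : ∀ S : Set (∀ i, X i), S ⊆ A → SemiOpen Sᶜ := by
    intro S hS
    have h1 : Aᶜ ⊆ interior Sᶜ :=
      interior_maximal (Set.compl_subset_compl.mpr hS) hAclosed.isOpen_compl
    have h2 : closure Aᶜ = Set.univ := by
      rw [closure_compl, hintA, Set.compl_empty]
    have h3 : closure (interior Sᶜ) = Set.univ := by
      apply Set.eq_univ_of_univ_subset
      rw [← h2]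
      exact closure_mono h1
    rw [SemiOpen, h3]
    exact Set.subset_univ _
  have hsg : ∀ M : Set (∀ i, X i), SemiOpen M → SgOpen M := by
    intro M hM F _ hFM
    exact hFM.trans (Set.subset_sUnion_of_mem ⟨hM, Set.Subset.rfl⟩)
  -- injectivity of z on B
  have hz_inj : ∀ i ∈ B, ∀ j ∈ B, z i = z j → i = j := by
    intro i hi j hj hij
    by_contra hne
    have h1 : z i i = u i := by rw [hzdef]; simp
    have h2 : z j i = a i := by
      rw [hzdef]; simp only [Function.update_of_ne hne]
    have : u i = a i := by rw [← h1, hij, h2]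
    exact ha i hi (this ▸ hu i hi)
  -- the cover
  set 𝒰 : Set (Set (∀ i, X i)) := (fun i => (Z \ {z i})ᶜ) '' B with h𝒰def
  have h𝒰sg : ∀ M ∈ 𝒰, SgOpen M := by
    rintro _ ⟨i, hi, rfl⟩
    exact hsg _ (hSemi _ ((Set.diff_subset).trans hZA))
  have hcover : ⋃₀ 𝒰 = Set.univ := by
    apply Set.eq_univ_of_forall
    intro x
    by_cases hx : ∃ i ∈ B, x = z i
    · obtain ⟨i, hi, rfl⟩ := hx
      exact ⟨(Z \ {z i})ᶜ, ⟨i, hi, rfl⟩, fun hc => hc.2 rfl⟩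
    · obtain ⟨i0, hi0⟩ := hinf.nonempty
      refine ⟨(Z \ {z i0})ᶜ, ⟨i0, hi0, rfl⟩, fun hc => ?_⟩
      obtain ⟨j, hj, hjx⟩ := hc.1
      exact hx ⟨j, hj, hjx.symm⟩
  obtain ⟨F, hFsub, hFfin, hFcov⟩ := h 𝒰 h𝒰sg hcover
  set G : Set I := {i ∈ B | (Z \ {z i})ᶜ ∈ F} with hGdef
  have hGfin : G.Finite := by
    apply Set.Finite.of_finite_image (f := fun i => (Z \ {z i})ᶜ)
    · apply hFfin.subset
      rintro _ ⟨i, ⟨_, hiF⟩, rfl⟩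
      exact hiF
    · intro i hi j hj hij
      have hZeq : Z \ {z i} = Z \ {z j} := by
        have := congrArg compl hij
        simpa using this
      have hzi : z i ∈ Z := ⟨i, hi.1, rfl⟩
      have : z i ∉ Z \ {z j} := by rw [← hZeq]; exact fun hc => hc.2 rfl
      have heq : z i = z j := by
        by_contra hne
        exact this ⟨hzi, hne⟩
      exact hz_inj i hi.1 j hj.1 heq
  obtain ⟨i', hi'⟩ := (hinf.diff hGfin).nonempty
  have hw : z i' ∈ ⋃₀ F := by rw [hFcov]; trivial
  obtain ⟨M, hMF, hwM⟩ := hw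
  obtain ⟨j, hjB, rfl⟩ := hFsub hMF
  have hjG : j ∈ G := ⟨hjB, hMF⟩
  have hzi' : z i' ∈ Z := ⟨i', hi'.1, rfl⟩
  have hne : z i' ≠ z j := fun e => hi'.2 (hz_inj i' hi'.1 j hjB e ▸ hjG)
  exact hwM ⟨hzi', hne⟩
end

section
/- If a product ∏_{i∈I} X_i of nonempty topological spaces is sg-compact, then at most one of the factor spaces X_i is infinite. -/
open Set Topology

lemma semiOpen_of_isOpen {X : Type*} [TopologicalSpace X] {A : Set X} (h : IsOpen A) :
    SemiOpen A := by
  rw [SemiOpen, h.interior_eq]; exact subset_closure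

lemma sgOpen_of_semiOpen {X : Type*} [TopologicalSpace X] {A : Set X} (h : SemiOpen A) :
    SgOpen A :=
  fun F _ hFA => hFA.trans (subset_sUnion_of_mem ⟨h, subset_rfl⟩)

/-- In an sg-compact space every nowhere dense set is finite. -/
lemma finite_of_nowhereDense {X : Type*} [TopologicalSpace X] (h : SgCompact X)
    {N : Set X} (hnd : interior (closure N) = ∅) : N.Finite := by
  by_contra hN
  have hNinf : N.Infinite := hN
  have hdense : Dense (closure N)ᶜ := interior_eq_empty_iff_dense_compl.1 hnd
  set 𝒰 : Set (Set X) := (fun x => Nᶜ ∪ {x}) '' N with h𝒰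
  have hsg : ∀ U ∈ 𝒰, SgOpen U := by
    rintro U ⟨x, hx, rfl⟩
    apply sgOpen_of_semiOpen
    intro y _
    have h1 : (closure N)ᶜ ⊆ interior (Nᶜ ∪ {x}) :=
      interior_maximal (Set.subset_union_of_subset_left
        (Set.compl_subset_compl.2 subset_closure) _) (isClosed_closure.isOpen_compl)
    have h2 : closure ((closure N)ᶜ) ⊆ closure (interior (Nᶜ ∪ {x})) := closure_mono h1
    rw [hdense.closure_eq] at h2
    exact h2 (Set.mem_univ y)
  have hcov : ⋃₀ 𝒰 = Set.univ := by
    apply Set.eq_univ_of_forall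
    intro p
    by_cases hp : p ∈ N
    · exact ⟨Nᶜ ∪ {p}, ⟨p, hp, rfl⟩, Or.inr rfl⟩
    · obtain ⟨x, hx⟩ := hNinf.nonempty
      exact ⟨Nᶜ ∪ {x}, ⟨x, hx, rfl⟩, Or.inl hp⟩
  obtain ⟨F, hF𝒰, hFfin, hFcov⟩ := h 𝒰 hsg hcov
  have hsub : N ⊆ ⋃ U ∈ F, {x ∈ N | U = Nᶜ ∪ {x}} := by
    intro x hxN
    have hx : x ∈ ⋃₀ F := hFcov ▸ Set.mem_univ x
    obtain ⟨U, hUF, hxU⟩ := hx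
    obtain ⟨y, hyN, rfl⟩ := hF𝒰 hUF
    have hxy : x = y := by
      rcases hxU with hx' | hx'
      · exact absurd hxN hx'
      · exact hx'
    subst hxy
    exact Set.mem_biUnion hUF ⟨hxN, rfl⟩
  have hfin : (⋃ U ∈ F, {x ∈ N | U = Nᶜ ∪ {x}}).Finite := by
    apply hFfin.biUnion
    intro U _
    apply Set.Subsingleton.finite
    rintro a ⟨haN, rfl⟩ b ⟨hbN, hb⟩
    have : b ∈ Nᶜ ∪ {a} := hb ▸ (Or.inr rfl : b ∈ Nᶜ ∪ {b})
    rcases this with h' | h'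
    · exact absurd hbN h'
    · exact h'.symm
  exact hN (hfin.subset hsub)

theorem stmt_12 {I : Type*} (X : I → Type*) [∀ i, TopologicalSpace (X i)]
    [∀ i, Nonempty (X i)]
    (h : SgCompact (∀ i, X i)) :
    ∀ i j : I, Infinite (X i) → Infinite (X j) → i = j := by
  intro i j hi hj
  by_contra hij
  haveI := hi
  haveI := hj
  classical
  -- the closed "tube" in direction `d` around a point `q`
  set T : I → (∀ k, X k) → Set (∀ k, X k) :=
    fun d q => ⋂ (m) (_ : m ≠ d), (fun p : ∀ k, X k => p m) ⁻¹' closure {q m} with hT_def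
  have hTclosed : ∀ d q, IsClosed (T d q) := fun d q =>
    isClosed_iInter fun m => isClosed_iInter fun _ =>
      isClosed_closure.preimage (continuous_apply m)
  -- tubes in infinite directions have nonempty interior
  have hTint : ∀ (d : I) (q : ∀ k, X k), Infinite (X d) → (interior (T d q)).Nonempty := by
    intro d q hd
    haveI := hd
    set M : Set (∀ k, X k) := Set.range (fun z : X d => Function.update q d z) with hM_def
    have hMT : M ⊆ T d q := by
      rintro p ⟨z, rfl⟩
      apply Set.mem_iInter₂.2
      intro m hm
      have heq : Function.update q d z m = q m := Function.update_of_ne hm z q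
      show Function.update q d z m ∈ closure {q m}
      rw [heq]
      exact subset_closure rfl
    have hMinf : M.Infinite := by
      apply Set.infinite_range_of_injective
      intro a b hab
      have := congrFun hab d
      simpa using this
    have hne : interior (closure M) ≠ ∅ := fun he => hMinf (finite_of_nowhereDense h he)
    have h1 : interior (closure M) ⊆ interior (T d q) :=
      interior_mono (closure_minimal hMT (hTclosed d q))
    exact (Set.nonempty_iff_ne_empty.2 hne).mono h1
  -- every singleton in X i is somewhere dense
  have hqi : ∀ q : ∀ k, X k, (interior (closure ({q i} : Set (X i)))).Nonempty := by
    intro q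
    obtain ⟨p, hp⟩ := hTint j q hj
    have himg : Function.eval i '' interior (T j q) ⊆ closure {q i} := by
      rintro _ ⟨r, hr, rfl⟩
      have hrT : r ∈ T j q := interior_subset hr
      exact Set.mem_iInter₂.1 hrT i hij
    have hopen : IsOpen (Function.eval i '' interior (T j q)) :=
      isOpenMap_eval i _ isOpen_interior
    have hsub : Function.eval i '' interior (T j q) ⊆ interior (closure {q i}) :=
      interior_maximal himg hopen
    exact ⟨p i, hsub ⟨p, hp, rfl⟩⟩
  -- every singleton in the product is somewhere dense
  have hq : ∀ q : ∀ k, X k, (interior (closure ({q} : Set (∀ k, X k)))).Nonempty := by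
    intro q
    obtain ⟨p, hp⟩ := hTint i q hi
    obtain ⟨z, hz⟩ := hqi q
    set p' : ∀ k, X k := Function.update p i z with hp'_def
    have hρ : Continuous (fun r : ∀ k, X k => Function.update r i (p i)) :=
      continuous_id.update i continuous_const
    have hO : (fun r : ∀ k, X k => Function.update r i (p i)) ⁻¹' interior (T i q) ⊆ T i q := by
      intro r hr
      have hrT : Function.update r i (p i) ∈ T i q := interior_subset hr
      apply Set.mem_iInter₂.2
      intro m hm
      have : Function.update r i (p i) m = r m := Function.update_of_ne hm _ r
      have := Set.mem_iInter₂.1 hrT m hm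
      simpa [Function.update_of_ne hm] using this
    have hp'mem : p' ∈ (fun r : ∀ k, X k => Function.update r i (p i)) ⁻¹' interior (T i q) := by
      show Function.update p' i (p i) ∈ interior (T i q)
      have : Function.update p' i (p i) = p := by
        rw [hp'_def, Function.update_idem, Function.update_eq_self]
      rwa [this]
    have hp'int : p' ∈ interior (T i q) :=
      interior_maximal hO (isOpen_interior.preimage hρ) hp'mem
    have hkey : interior (T i q) ∩ (fun r : ∀ k, X k => r i) ⁻¹' interior (closure {q i})
        ⊆ closure {q} := by
      intro r ⟨hr1, hr2⟩
      have hcl : closure ({q} : Set (∀ k, X k)) = Set.pi Set.univ fun m => closure {q m} := by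
        rw [← Set.univ_pi_singleton q, closure_pi_set]
      rw [hcl]
      intro m _
      by_cases hm : m = i
      · subst hm
        exact interior_subset hr2
      · exact Set.mem_iInter₂.1 (interior_subset hr1) m hm
    have hopen : IsOpen (interior (T i q) ∩ (fun r : ∀ k, X k => r i) ⁻¹' interior (closure {q i})) :=
      isOpen_interior.inter (isOpen_interior.preimage (continuous_apply i))
    have : p' ∈ interior (closure ({q} : Set (∀ k, X k))) := by
      apply interior_maximal hkey hopen
      refine ⟨hp'int, ?_⟩
      show p' i ∈ interior (closure {q i})
      simpa [hp'_def] using hz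
    exact ⟨p', this⟩
  -- the fibers of eval i form an sg-open cover with no finite subcover
  set 𝒰 : Set (Set (∀ k, X k)) :=
    Set.range (fun y : X i => (fun p : ∀ k, X k => p i) ⁻¹' ({y} : Set (X i))) with h𝒰_def
  have hsg : ∀ U ∈ 𝒰, SgOpen U := by
    rintro U ⟨y, rfl⟩
    by_cases hy : IsOpen ({y} : Set (X i))
    · exact sgOpen_of_semiOpen (semiOpen_of_isOpen (hy.preimage (continuous_apply i)))
    · intro F hF hFA x hx
      exfalso
      apply hy
      have h1 : interior (closure ({x} : Set (∀ k, X k))) ⊆ F :=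
        (interior_mono (closure_mono (Set.singleton_subset_iff.2 hx))).trans hF
      have h2 : Function.eval i '' interior (closure ({x} : Set (∀ k, X k))) ⊆ {y} := by
        rintro _ ⟨r, hr, rfl⟩
        exact hFA (h1 hr)
      have h3 : (Function.eval i '' interior (closure ({x} : Set (∀ k, X k)))).Nonempty :=
        (hq x).image _
      have h4 : Function.eval i '' interior (closure ({x} : Set (∀ k, X k))) = {y} := by
        rcases Set.subset_singleton_iff_eq.1 h2 with he | he
        · exact absurd he h3.ne_empty
        · exact he
      rw [← h4]
      exact isOpenMap_eval i _ isOpen_interior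
  have hcov : ⋃₀ 𝒰 = Set.univ := by
    apply Set.eq_univ_of_forall
    intro p
    exact ⟨_, ⟨p i, rfl⟩, rfl⟩
  obtain ⟨F, hF𝒰, hFfin, hFcov⟩ := h 𝒰 hsg hcov
  have hsub : (Set.univ : Set (X i)) ⊆
      ⋃ U ∈ F, {y : X i | U = (fun p : ∀ k, X k => p i) ⁻¹' ({y} : Set (X i))} := by
    intro y _
    set py : ∀ k, X k := Function.update (Classical.arbitrary _) i y with hpy_def
    have hpy : py ∈ ⋃₀ F := hFcov ▸ Set.mem_univ py
    obtain ⟨U, hUF, hpyU⟩ := hpy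
    obtain ⟨g, rfl⟩ := hF𝒰 hUF
    have : py i = g := hpyU
    have hyg : y = g := by
      rw [← this, hpy_def, Function.update_self]
    subst hyg
    exact Set.mem_biUnion hUF rfl
  have hfin : (⋃ U ∈ F, {y : X i | U = (fun p : ∀ k, X k => p i) ⁻¹' ({y} : Set (X i))}).Finite := by
    apply hFfin.biUnion
    intro U _
    apply Set.Subsingleton.finite
    rintro a ha b hb
    simp only [Set.mem_setOf_eq] at ha hb
    have hab : (fun p : ∀ k, X k => p i) ⁻¹' ({a} : Set (X i)) =
        (fun p : ∀ k, X k => p i) ⁻¹' ({b} : Set (X i)) := by rw [← ha, ← hb]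
    have hpa : Function.update (Classical.arbitrary (∀ k, X k)) i a ∈
        (fun p : ∀ k, X k => p i) ⁻¹' ({a} : Set (X i)) := by
      show Function.update (Classical.arbitrary (∀ k, X k)) i a i ∈ ({a} : Set (X i))
      rw [Function.update_self]
      rfl
    rw [hab] at hpa
    have : Function.update (Classical.arbitrary (∀ k, X k)) i a i = b := hpa
    rwa [Function.update_self] at this
  exact Set.infinite_univ (hfin.subset hsub)
end

section
/- If a product ∏_{i∈I} X_i of nonempty topological spaces is sg-compact, then either all factor spaces are finite, or exactly one factor space is infinite and sg-compact and all the remaining factor spaces are finite and locally indiscrete. -/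
open Set Topology

/-!
In an sg-compact space every hereditarily sg-closed set is finite, and both nowhere dense sets
and arbitrary subsets of a locally indiscrete space are hereditarily sg-closed.

If `X j` is infinite and `i ≠ j`, the preimage in the product of the frontier of an open set of
`X i` is nowhere dense, and infinite unless empty; so every other factor is locally indiscrete.
If infinitely many factors had a nontrivial clopen set, the points having exactly one coordinate
in these clopen sets would form an infinite subset of the closed nowhere dense set of points
having at most one; so all but finitely many factors are indiscrete, and `∏_{i ≠ j} X i` is
locally indiscrete. Over a locally indiscrete `Y`, preimages of sg-open sets under `X × Y → X`
are sg-open, hence `X j` inherits sg-compactness. A second infinite factor would, by the same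
argument, be sg-compact and locally indiscrete, hence finite.
-/

open Function

section

variable {X Y : Type*} [TopologicalSpace X] [TopologicalSpace Y]

lemma semiClosed_closure (A : Set X) : SemiClosed (closure A) := by
  rw [SemiClosed, closure_closure]
  exact interior_subset

lemma SemiClosed.semiOpen_compl {F : Set X} (hF : SemiClosed F) : SemiOpen Fᶜ := by
  rw [SemiOpen, interior_compl, closure_compl]
  exact compl_subset_compl.2 hF

lemma semiClosed_scl (A : Set X) : SemiClosed (scl A) := fun _ hx =>
  mem_sInter.2 fun _ hS => hS.1 (interior_mono (closure_mono (sInter_subset_of_mem hS)) hx)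

lemma SemiClosed.sgClosed {A : Set X} (hA : SemiClosed A) : SgClosed A :=
  (sInter_subset_of_mem ⟨hA, Subset.rfl⟩ : scl A ⊆ A).trans (subset_sInter fun _ hS => hS.2)

lemma IsNowhereDense.semiClosed {A : Set X} (hA : IsNowhereDense A) : SemiClosed A := by
  rw [SemiClosed, show interior (closure A) = ∅ from hA]
  exact empty_subset A

lemma SgClosed.sgOpen_compl {A : Set X} (hA : SgClosed A) : SgOpen Aᶜ := by
  intro F hF hFA x hx
  have hsker : sker A ⊆ Fᶜ := sInter_subset_of_mem ⟨hF.semiOpen_compl, subset_compl_comm.mp hFA⟩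
  exact ⟨(scl A)ᶜ, ⟨(semiClosed_scl A).semiOpen_compl,
    compl_subset_compl.2 (subset_sInter fun _ hS => hS.2)⟩,
    subset_compl_comm.mp (hA.trans hsker) hx⟩

lemma SemiOpen.preimage {f : X → Y} (hf : IsOpenMap f) (hfc : Continuous f) {S : Set Y}
    (hS : SemiOpen S) : SemiOpen (f ⁻¹' S) := by
  rw [SemiOpen, ← hf.preimage_interior_eq_interior_preimage hfc,
    ← hf.preimage_closure_eq_closure_preimage hfc]
  exact preimage_mono hS

lemma SemiClosed.preimage {f : X → Y} (hf : IsOpenMap f) (hfc : Continuous f) {F : Set Y}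
    (hF : SemiClosed F) : SemiClosed (f ⁻¹' F) := by
  rw [SemiClosed, ← hf.preimage_closure_eq_closure_preimage hfc,
    ← hf.preimage_interior_eq_interior_preimage hfc]
  exact preimage_mono hF

lemma SgOpen.preimage_homeomorph (e : X ≃ₜ Y) {V : Set Y} (hV : SgOpen V) :
    SgOpen (e ⁻¹' V) := by
  intro F hF hFV x hx
  have hF' : SemiClosed (e.symm ⁻¹' F) := hF.preimage e.symm.isOpenMap e.symm.continuous
  obtain ⟨S, ⟨hS, hSV⟩, hxS⟩ :=
    hV _ hF' (fun y hy => by simpa using hFV hy) (show e.symm (e x) ∈ F by simpa)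
  exact ⟨e ⁻¹' S, ⟨hS.preimage e.isOpenMap e.continuous, preimage_mono hSV⟩, hxS⟩

lemma locallyIndiscrete_iff_isOpen_closure_singleton :
    LocallyIndiscrete X ↔ ∀ x : X, IsOpen (closure {x}) := by
  refine ⟨fun hX x => by simpa using (hX _ isClosed_closure.isOpen_compl).isOpen_compl,
    fun h U hU => closure_subset_iff_isClosed.mp fun x hx => ?_⟩
  obtain ⟨y, hyx, hyU⟩ := mem_closure_iff.mp hx _ (h x) (subset_closure rfl)
  exact (specializes_iff_mem_closure.mpr hyx).mem_open hU hyU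

lemma LocallyIndiscrete.isOpen_closure_singleton (hX : LocallyIndiscrete X) (x : X) :
    IsOpen (closure {x}) :=
  locallyIndiscrete_iff_isOpen_closure_singleton.mp hX x

lemma LocallyIndiscrete.closure_singleton_eq_univ [PreconnectedSpace X]
    (hX : LocallyIndiscrete X) (x : X) : closure {x} = univ :=
  IsClopen.eq_univ ⟨isClosed_closure, hX.isOpen_closure_singleton x⟩ ⟨x, subset_closure rfl⟩

lemma LocallyIndiscrete.sgClosed (hX : LocallyIndiscrete X) (A : Set X) : SgClosed A := by
  refine (sInter_subset_of_mem ⟨semiClosed_closure A, subset_closure⟩ : scl A ⊆ closure A).trans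
    (subset_sInter fun S ⟨hS, hAS⟩ => ?_)
  rw [SemiOpen, (hX _ isOpen_interior).closure_eq, subset_interior_iff_isOpen] at hS
  exact closure_minimal hAS (hX S hS)

lemma SgOpen.preimage_fst (hY : LocallyIndiscrete Y) {V : Set X} (hV : SgOpen V) :
    SgOpen (Prod.fst ⁻¹' V : Set (X × Y)) := by
  rintro F hF hFV ⟨x, y⟩ hxy
  set G : Set X := {x' | (x', y) ∈ F}
  -- `G` is semi-closed because `closure {y}` is an open set of specializations of `y`.
  have hG : SemiClosed G := by
    intro a ha
    have hsub : interior (closure G) ×ˢ closure {y} ⊆ closure F := by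
      rintro ⟨a', b⟩ ⟨ha', hb⟩
      have hay : (a', y) ∈ closure F :=
        map_mem_closure (f := fun x' => (x', y)) (Continuous.prodMk_left y)
          (interior_subset ha') fun _ hx' => hx'
      exact ((specializes_refl a').prod (specializes_iff_mem_closure.mpr hb)).mem_closed
        isClosed_closure hay
    exact hF (interior_maximal hsub (isOpen_interior.prod (hY.isOpen_closure_singleton y))
      ⟨ha, subset_closure rfl⟩)
  obtain ⟨S, ⟨hS, hSV⟩, hxS⟩ := hV G hG (fun _ hx' => hFV hx') hxy
  exact ⟨Prod.fst ⁻¹' S, ⟨hS.preimage isOpenMap_fst continuous_fst, preimage_mono hSV⟩, hxS⟩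

lemma SgCompact.of_surjective {f : X → Y} (hf : Surjective f)
    (hpre : ∀ V, SgOpen V → SgOpen (f ⁻¹' V)) (hX : SgCompact X) : SgCompact Y := by
  intro 𝒱 h𝒱 hcov
  obtain ⟨𝒰, h𝒰, hfin, hcov'⟩ := hX (preimage f '' 𝒱)
    (forall_mem_image.2 fun V hV => hpre V (h𝒱 V hV))
    (by rw [sUnion_image, ← preimage_iUnion₂, ← sUnion_eq_biUnion, hcov, preimage_univ])
  refine ⟨{V ∈ 𝒱 | f ⁻¹' V ∈ 𝒰}, sep_subset _ _,
    (hfin.preimage hf.preimage_injective.injOn).subset fun _ hV => hV.2,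
    eq_univ_of_forall fun y => ?_⟩
  obtain ⟨x, rfl⟩ := hf y
  obtain ⟨U, hU, hxU⟩ := hcov' ▸ mem_univ x
  obtain ⟨V, hV, rfl⟩ := h𝒰 hU
  exact ⟨V, ⟨hV, hU⟩, hxU⟩

lemma SgCompact.finite_of_hSgClosed (hX : SgCompact X) {A : Set X} (hA : HSgClosed A) :
    A.Finite := by
  obtain ⟨𝒰, h𝒰, hfin, hcov⟩ := hX (range fun x => (A \ {x})ᶜ)
    (forall_mem_range.2 fun x => (hA _ sdiff_subset).sgOpen_compl)
    (eq_univ_of_forall fun y => mem_sUnion_of_mem (by simp) (mem_range_self y))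
  refine (hfin.biUnion (t := fun U => U ∩ A) fun U hU => ?_).subset fun a ha => ?_
  · obtain ⟨x, rfl⟩ := h𝒰 hU
    exact (finite_singleton x).subset fun y ⟨hyA, hy⟩ => by_contra fun hyx => hyA ⟨hy, hyx⟩
  · obtain ⟨U, hU, haU⟩ := hcov ▸ mem_univ a
    exact mem_biUnion hU ⟨haU, ha⟩

lemma SgCompact.finite_of_isNowhereDense (hX : SgCompact X) {A : Set X}
    (hA : IsNowhereDense A) : A.Finite :=
  hX.finite_of_hSgClosed fun _ hB => (hA.mono hB).semiClosed.sgClosed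

lemma SgCompact.finite_of_locallyIndiscrete (hX : SgCompact X) (hLI : LocallyIndiscrete X) :
    Finite X :=
  finite_univ_iff.mp (hX.finite_of_hSgClosed fun B _ => hLI.sgClosed B)

end

section

variable {I : Type*} {X : I → Type*}

lemma Set.Nonempty.infinite_preimage_eval [∀ i, Nonempty (X i)] {i j : I} (hij : i ≠ j)
    [Infinite (X j)] {s : Set (X i)} (hs : s.Nonempty) : (eval i ⁻¹' s).Infinite := by
  classical
  obtain ⟨x, hx⟩ := hs
  let g : ∀ k, X k := update (fun _ => Classical.arbitrary _) i x
  refine infinite_of_injective_forall_mem (update_injective g j) fun y => ?_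
  simpa [g, update_of_ne hij] using hx

def atMostOneMem (T : Set I) (U : ∀ i, Set (X i)) : Set (∀ i, X i) :=
  ⋂ i ∈ T, ⋂ k ∈ T \ {i}, (eval i ⁻¹' U i ∩ eval k ⁻¹' U k)ᶜ

variable [∀ i, TopologicalSpace (X i)]

lemma locallyIndiscrete_pi (hX : ∀ i, LocallyIndiscrete (X i))
    (hfin : {i | ¬ PreconnectedSpace (X i)}.Finite) : LocallyIndiscrete (∀ i, X i) := by
  refine locallyIndiscrete_iff_isOpen_closure_singleton.2 fun f => ?_
  have hcl : closure {f} = ⋂ i ∈ {i | ¬ PreconnectedSpace (X i)}, eval i ⁻¹' closure {f i} := by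
    ext g
    simp only [← specializes_iff_mem_closure, specializes_pi, mem_iInter₂, mem_preimage, eval]
    refine ⟨fun h i _ => h i, fun h i => ?_⟩
    by_cases hi : PreconnectedSpace (X i)
    · rw [specializes_iff_mem_closure, (hX i).closure_singleton_eq_univ]
      exact mem_univ _
    · exact h i hi
  rw [hcl]
  exact hfin.isOpen_biInter fun i _ =>
    ((hX i).isOpen_closure_singleton (f i)).preimage (continuous_apply i)

lemma exists_finset_forall_mem_of_isOpen {O : Set (∀ i, X i)} (hO : IsOpen O)
    {f : ∀ i, X i} (hf : f ∈ O) :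
    ∃ E : Finset I, ∀ g : ∀ i, X i, (∀ i ∈ E, g i = f i) → g ∈ O := by
  obtain ⟨E, W, hW, hEW⟩ := isOpen_pi_iff.mp hO f hf
  exact ⟨E, fun g hg => hEW fun i hi => (hg i hi).symm ▸ (hW i hi).2⟩

lemma isClosed_atMostOneMem {T : Set I} {U : ∀ i, Set (X i)}
    (hU : ∀ i ∈ T, IsOpen (U i)) : IsClosed (atMostOneMem T U) :=
  isClosed_biInter fun i hi => isClosed_biInter fun k hk =>
    (((hU i hi).preimage (continuous_apply i)).inter
      ((hU k hk.1).preimage (continuous_apply k))).isClosed_compl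

lemma interior_atMostOneMem_eq_empty {T : Set I} (hT : T.Infinite) {U : ∀ i, Set (X i)}
    (hU : ∀ i ∈ T, (U i).Nonempty) : interior (atMostOneMem T U) = ∅ := by
  classical
  refine eq_empty_of_forall_notMem fun f hf => ?_
  obtain ⟨E, hE⟩ := exists_finset_forall_mem_of_isOpen isOpen_interior hf
  obtain ⟨i, ⟨hiT, hiE⟩, k, ⟨hkT, hkE⟩, hik⟩ := (hT.sdiff E.finite_toSet).nontrivial
  obtain ⟨a, ha⟩ := hU i hiT
  obtain ⟨b, hb⟩ := hU k hkT
  let g := update (update f i a) k b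
  have hg : g ∈ atMostOneMem T U := interior_subset <| hE g fun l hl => by
    have hli : l ≠ i := by rintro rfl; exact hiE hl
    have hlk : l ≠ k := by rintro rfl; exact hkE hl
    simp [g, hli, hlk]
  simp only [atMostOneMem, mem_iInter₂] at hg
  exact hg i hiT k ⟨hkT, hik.symm⟩ ⟨by simpa [g, update_of_ne hik] using ha, by simpa [g] using hb⟩

variable [∀ i, Nonempty (X i)]

lemma SgCompact.locallyIndiscrete_of_pi (h : SgCompact (∀ i, X i)) {i j : I} (hij : i ≠ j)
    [Infinite (X j)] : LocallyIndiscrete (X i) := by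
  intro U hU
  have hnd : IsNowhereDense (eval i ⁻¹' frontier U) := by
    rw [(isClosed_frontier.preimage (continuous_apply i)).isNowhereDense_iff,
      ← (isOpenMap_eval i).preimage_interior_eq_interior_preimage (continuous_apply i),
      ← frontier_compl, interior_frontier hU.isClosed_compl, preimage_empty]
  have hfr : frontier U = ∅ := not_nonempty_iff_eq_empty.mp fun hne =>
    hne.infinite_preimage_eval hij (h.finite_of_isNowhereDense hnd)
  exact (isClopen_iff_frontier_eq_empty.mpr hfr).isClosed

lemma SgCompact.finite_setOf_not_preconnectedSpace (h : SgCompact (∀ i, X i)) :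
    {i | ¬ PreconnectedSpace (X i)}.Finite := by
  classical
  by_contra hT
  set T := {i | ¬ PreconnectedSpace (X i)}
  replace hT : T.Infinite := hT
  have hclopen : ∀ i ∈ T, ∃ (U : Set (X i)) (a b : X i), IsClopen U ∧ a ∈ U ∧ b ∉ U := by
    intro i hi
    obtain ⟨U, hU, hne, hnu⟩ : ∃ U : Set (X i), IsClopen U ∧ U ≠ ∅ ∧ U ≠ univ := by
      simpa [T, preconnectedSpace_iff_clopen] using hi
    obtain ⟨a, ha⟩ := nonempty_iff_ne_empty.2 hne
    obtain ⟨b, hb⟩ := (ne_univ_iff_exists_notMem U).1 hnu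
    exact ⟨U, a, b, hU, ha, hb⟩
  choose! U a b hU ha hb using hclopen
  let z : I → ∀ i, X i := fun t i => if i = t then a i else b i
  have hz : ∀ t, ∀ i ∈ T, z t i ∈ U i → i = t := fun t i hi hzi => by
    by_contra hit
    exact hb i hi (by simpa [z, hit] using hzi)
  have hzC : z '' T ⊆ atMostOneMem T U := by
    rintro _ ⟨t, -, rfl⟩
    simp only [atMostOneMem, mem_iInter₂]
    rintro i hi k ⟨hk, hki⟩ ⟨hzi, hzk⟩
    exact hki ((hz t k hk hzk).trans (hz t i hi hzi).symm)
  have hzinj : InjOn z T := fun t ht t' _ htt' =>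
    hz t' t ht (htt' ▸ by simpa [z] using ha t ht)
  have hnd : IsNowhereDense (atMostOneMem T U) :=
    (isClosed_atMostOneMem fun i hi => (hU i hi).isOpen).isNowhereDense_iff.2
      (interior_atMostOneMem_eq_empty hT fun i hi => ⟨a i, ha i hi⟩)
  exact (hT.image hzinj) (h.finite_of_isNowhereDense (hnd.mono hzC))

lemma SgCompact.of_pi (h : SgCompact (∀ i, X i)) {j : I}
    (hX : ∀ i ≠ j, LocallyIndiscrete (X i)) : SgCompact (X j) := by
  classical
  have hY : LocallyIndiscrete (∀ i : {i // i ≠ j}, X i) := locallyIndiscrete_pi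
    (fun i => hX i i.2) (h.finite_setOf_not_preconnectedSpace.preimage Subtype.val_injective.injOn)
  exact h.of_surjective (f := Prod.fst ∘ Homeomorph.piSplitAt j X)
    (Prod.fst_surjective.comp (Homeomorph.surjective _))
    fun V hV => (hV.preimage_fst hY).preimage_homeomorph _

end

theorem stmt_13 {I : Type*} (X : I → Type*) [∀ i, TopologicalSpace (X i)]
    [∀ i, Nonempty (X i)]
    (h : SgCompact (∀ i, X i)) :
    (∀ i, Finite (X i)) ∨
      ∃ j, Infinite (X j) ∧ SgCompact (X j) ∧
        ∀ i, i ≠ j → Finite (X i) ∧ LocallyIndiscrete (X i) := by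
  by_cases hfin : ∀ i, Finite (X i)
  · exact Or.inl hfin
  obtain ⟨j, hj⟩ := not_forall.mp hfin
  have : Infinite (X j) := not_finite_iff_infinite.mp hj
  have hLI : ∀ i ≠ j, LocallyIndiscrete (X i) := fun i hij => h.locallyIndiscrete_of_pi hij
  refine Or.inr ⟨j, this, h.of_pi hLI, fun i hij => ⟨by_contra fun hi => ?_, hLI i hij⟩⟩
  have : Infinite (X i) := not_finite_iff_infinite.mp hi
  have hLI' : ∀ k ≠ i, LocallyIndiscrete (X k) := fun k hki => h.locallyIndiscrete_of_pi hki
  exact hi ((h.of_pi hLI').finite_of_locallyIndiscrete (hLI i hij))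
end

section
/- Let X = {a,b,c} with topology τ = {∅, {a,b}, X} and A = {b,c}. Then A is sg-closed in X, but A × A is not sg-closed in X × X. -/
open Set Topology

/-!
Encode `a, b, c` as `0, 1, 2 : Fin 3`. In `τ` every nonempty open set contains `{a, b}`. Hence a
semi-open set containing `c` has nonempty interior and is all of `X`, so `sker A = X` and `A` is
sg-closed. In `X × X` the set `A × A` is dense, so its only semi-closed superset is `X × X`; but
the open dense set `{a, b} × {a, b}` makes `{a, b} × {a, b} ∪ A × A` a semi-open superset of
`A × A` missing `(a, c)`.
-/

section SemiTopology

variable {X : Type*} [TopologicalSpace X] {A S : Set X}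

lemma SemiOpen.nonempty_interior (hS : SemiOpen S) (hne : S.Nonempty) :
    (interior S).Nonempty := by
  obtain ⟨x, hx⟩ := hne
  by_contra h
  rw [not_nonempty_iff_eq_empty] at h
  simpa [h] using hS hx

lemma semiOpen_of_dense_isOpen_subset {V : Set X} (hVd : Dense V) (hVo : IsOpen V)
    (hVS : V ⊆ S) : SemiOpen S := fun _ _ ↦
  closure_mono (interior_maximal hVS hVo) (hVd.closure_eq ▸ mem_univ _)

lemma scl_eq_univ_of_dense (hA : Dense A) : scl A = univ := by
  refine eq_univ_of_univ_subset (subset_sInter fun F ⟨hF, hAF⟩ ↦ ?_)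
  have hFd : closure F = univ := (hA.mono hAF).closure_eq
  simpa [SemiClosed, hFd] using hF

lemma subset_sker_s14 : A ⊆ sker A := subset_sInter fun _ h ↦ h.2

lemma sker_subset (hS : SemiOpen S) (hAS : A ⊆ S) : sker A ⊆ S :=
  sInter_subset_of_mem ⟨hS, hAS⟩

lemma not_sgClosed_of_dense (hA : Dense A) (hS : SemiOpen S) (hAS : A ⊆ S) (hSne : S ≠ univ) :
    ¬ SgClosed A := fun h ↦ by
  have hAS' : scl A ⊆ S := h.trans (sker_subset hS hAS)
  rw [scl_eq_univ_of_dense hA] at hAS'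
  exact hSne (eq_univ_of_univ_subset hAS')

end SemiTopology

lemma subset_of_isOpen_generateFrom_singleton {X : Type*} {U V : Set X}
    (hV : IsOpen[TopologicalSpace.generateFrom {U}] V) (hne : V.Nonempty) : U ⊆ V := by
  induction hV with
  | basic s hs => exact (mem_singleton_iff.mp hs).symm.subset
  | univ => exact subset_univ U
  | inter s t _ _ ihs iht =>
    exact subset_inter (ihs (hne.mono inter_subset_left)) (iht (hne.mono inter_subset_right))
  | sUnion 𝒮 _ ih =>
    obtain ⟨x, s, hs, hx⟩ := hne
    exact (ih s hs ⟨x, hx⟩).trans (subset_sUnion_of_mem hs)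

section NonemptyOpenSupset

variable {X : Type*} [TopologicalSpace X] {U A : Set X}
variable (hU : ∀ V : Set X, IsOpen V → V.Nonempty → U ⊆ V)
include hU

lemma dense_of_inter_nonempty (hA : (U ∩ A).Nonempty) : Dense A :=
  dense_iff_inter_open.mpr fun _ hV hne ↦ hA.mono (inter_subset_inter_left _ (hU _ hV hne))

lemma union_subset_sker (hA : A.Nonempty) : U ∪ A ⊆ sker A := by
  refine union_subset (subset_sInter fun S ⟨hS, hAS⟩ ↦ ?_) subset_sker_s14
  exact (hU _ isOpen_interior (hS.nonempty_interior (hA.mono hAS))).trans interior_subset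

end NonemptyOpenSupset

theorem stmt_14 :
    let t : TopologicalSpace (Fin 3) := TopologicalSpace.generateFrom {({0, 1} : Set (Fin 3))}
    let A : Set (Fin 3) := {1, 2}
    @SgClosed (Fin 3) t A ∧
      ¬ @SgClosed (Fin 3 × Fin 3) (@instTopologicalSpaceProd _ _ t t) (A ×ˢ A) := by
  intro t A
  have hU : ∀ V : Set (Fin 3), IsOpen V → V.Nonempty → ({0, 1} : Set (Fin 3)) ⊆ V :=
    fun _ ↦ subset_of_isOpen_generateFrom_singleton
  have hUA : {0, 1} ∪ A = univ := by ext x; fin_cases x <;> simp [A]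
  have hUd : Dense ({0, 1} : Set (Fin 3)) := dense_of_inter_nonempty hU ⟨1, by simp⟩
  have hAd : Dense A := dense_of_inter_nonempty hU ⟨1, by simp [A]⟩
  have hUo : IsOpen ({0, 1} : Set (Fin 3)) := TopologicalSpace.isOpen_generateFrom_of_mem rfl
  refine ⟨fun x _ ↦ union_subset_sker hU ⟨1, by simp [A]⟩ (hUA ▸ mem_univ x), ?_⟩
  refine not_sgClosed_of_dense (hAd.prod hAd)
    (semiOpen_of_dense_isOpen_subset (hUd.prod hUd) (hUo.prod hUo) subset_union_left)
    subset_union_right fun h ↦ ?_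
  exact absurd (h ▸ mem_univ ((0 : Fin 3), (2 : Fin 3))) (by simp [A])
end

section
/- If f : X → Y is an almost open, continuous, anti-δ-open surjection, then the preimage under f of every hereditarily sg-closed subset of Y is hereditarily sg-closed in X. -/
open Set Topology

lemma aux_nd {X : Type*} [TopologicalSpace X] (C : Set X) (x : X)
    (h : interior (closure ({x} : Set X)) = ∅) :
    interior (closure C) ⊆ interior (closure (C \ {x})) := by
  set D := closure (C \ {x}) with hD
  set N := closure ({x} : Set X) with hN
  have hCsub : closure C ⊆ D ∪ N := by
    have hsub : C ⊆ (C \ {x}) ∪ {x} := by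
      intro c hc
      by_cases hcx : c = x
      · exact Or.inr (by simp [hcx])
      · exact Or.inl ⟨hc, hcx⟩
    calc closure C ⊆ closure ((C \ {x}) ∪ {x}) := closure_mono hsub
      _ = D ∪ N := closure_union
  have step1 : interior (closure C) ⊆ closure (interior D) := by
    intro v hv
    have hvDN : v ∈ interior (D ∪ N) := interior_mono hCsub hv
    rw [mem_closure_iff]
    intro O hO hvO
    set W := O ∩ interior (D ∪ N) with hW
    have hWopen : IsOpen W := hO.inter isOpen_interior
    have hWne : W.Nonempty := ⟨v, hvO, hvDN⟩
    have hnotsub : ¬ W ⊆ N := by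
      intro hsub
      have : W ⊆ interior N := interior_maximal hsub hWopen
      rw [hN, h] at this
      exact hWne.not_subset_empty this
    obtain ⟨p, hpW, hpN⟩ := not_subset.mp hnotsub
    have hWN : W \ N ⊆ interior D := by
      apply interior_maximal
      · intro z hz
        rcases interior_subset hz.1.2 with hzD | hzN
        · exact hzD
        · exact absurd hzN hz.2
      · exact hWopen.sdiff isClosed_closure
    exact ⟨p, hpW.1, hWN ⟨hpW, hpN⟩⟩
  have step2 : interior (closure C) ⊆ interior (closure (interior D)) :=
    interior_maximal step1 isOpen_interior
  refine step2.trans ?_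
  exact interior_mono (closure_minimal interior_subset isClosed_closure)

lemma hsg_nd {Y : Type*} [TopologicalSpace Y] {B : Set Y} (hB : HSgClosed B) {y : Y}
    (hy : y ∈ interior (closure B)) : interior (closure ({y} : Set Y)) ≠ ∅ := by
  intro h
  have h1 : y ∈ interior (closure (B \ {y})) := aux_nd B y h hy
  have hscl : y ∈ scl (B \ {y}) := by
    intro S hS
    obtain ⟨hSc, hSsub⟩ := hS
    exact hSc (interior_mono (closure_mono hSsub) h1)
  have hsk : y ∈ sker (B \ {y}) := hB _ diff_subset hscl
  have hso : SemiOpen ({y}ᶜ : Set Y) := by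
    intro z _
    have : closure (interior ({y}ᶜ : Set Y)) = Set.univ := by
      rw [interior_compl, closure_compl, h, compl_empty]
    rw [this]; trivial
  have : y ∈ ({y}ᶜ : Set Y) := hsk ({y}ᶜ) ⟨hso, fun z hz => hz.2⟩
  exact this rfl

lemma nd_hsg {Y : Type*} [TopologicalSpace Y] {A : Set Y}
    (h : ∀ x ∈ interior (closure A), interior (closure ({x} : Set Y)) ≠ ∅) :
    HSgClosed A := by
  intro B hBA x hx
  have hclU : closure (B ∪ interior (closure B)) = closure B := by
    apply subset_antisymm
    · rw [closure_union]
      apply union_subset subset_rfl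
      exact closure_minimal interior_subset isClosed_closure
    · exact closure_mono subset_union_left
  have hxmem : x ∈ B ∪ interior (closure B) := by
    apply hx
    refine ⟨?_, subset_union_left⟩
    intro z hz
    rw [hclU] at hz
    exact Or.inr hz
  intro S hS
  obtain ⟨hSO, hBS⟩ := hS
  rcases hxmem with hxB | hxint
  · exact hBS hxB
  · have hxA : x ∈ interior (closure A) := interior_mono (closure_mono hBA) hxint
    have hW := h x hxA
    set W := interior (closure ({x} : Set Y)) with hWdef
    have hxW : x ∈ W := by
      obtain ⟨w, hw⟩ := nonempty_iff_ne_empty.mpr hW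
      have hwc : w ∈ closure ({x} : Set Y) := interior_subset hw
      rw [mem_closure_iff] at hwc
      obtain ⟨z, hzW, hzx⟩ := hwc W isOpen_interior hw
      rw [mem_singleton_iff] at hzx
      rwa [← hzx]
    have hxclB : x ∈ closure B := interior_subset hxint
    rw [mem_closure_iff] at hxclB
    obtain ⟨b, hbW, hbB⟩ := hxclB W isOpen_interior hxW
    have hbci : b ∈ closure (interior S) := hSO (hBS hbB)
    rw [mem_closure_iff] at hbci
    obtain ⟨p, hpW, hpS⟩ := hbci W isOpen_interior hbW
    have hpc : p ∈ closure ({x} : Set Y) := interior_subset hpW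
    rw [mem_closure_iff] at hpc
    obtain ⟨q, hq, hqx⟩ := hpc (W ∩ interior S) (isOpen_interior.inter isOpen_interior)
      ⟨hpW, hpS⟩
    rw [mem_singleton_iff] at hqx
    subst hqx
    exact interior_subset hq.2

theorem stmt_15 {X Y : Type*} [TopologicalSpace X] [TopologicalSpace Y] (f : X → Y)
    (halmost : ∀ U : Set X, U = interior (closure U) → IsOpen (f '' U))
    (hcont : Continuous f)
    (hanti : ∀ x : X, interior (closure ({x} : Set X)) = ∅ →
      interior (closure ({f x} : Set Y)) = ∅)
    (hsurj : Function.Surjective f)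
    (B : Set Y) (hB : HSgClosed B) : HSgClosed (f ⁻¹' B) := by
  apply nd_hsg
  intro x hx hnd
  have hy : interior (closure ({f x} : Set Y)) = ∅ := hanti x hnd
  set U := interior (closure (f ⁻¹' B)) with hU
  have hUreg : U = interior (closure U) := by
    apply subset_antisymm
    · exact interior_maximal subset_closure isOpen_interior
    · exact interior_mono (closure_minimal interior_subset isClosed_closure)
  have hopen : IsOpen (f '' U) := halmost U hUreg
  have himg : f '' U ⊆ closure B := by
    rintro y ⟨u, hu, rfl⟩
    have h1 : u ∈ closure (f ⁻¹' B) := interior_subset hu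
    have h2 : closure (f ⁻¹' B) ⊆ f ⁻¹' (closure B) :=
      closure_minimal (preimage_mono subset_closure) (isClosed_closure.preimage hcont)
    exact h2 h1
  have himg2 : f '' U ⊆ interior (closure B) := interior_maximal himg hopen
  have hfx : f x ∈ interior (closure B) := himg2 ⟨x, hx, rfl⟩
  exact hsg_nd hB hfx hy
end

section
/- A topological sum X = Σ_{α∈Ω} X_α of nonempty spaces is sg-compact if and only if each X_α is sg-compact and Ω is finite. -/
open Set Topology

section Aux

variable {Ω : Type*} {X : Ω → Type*} [∀ α, TopologicalSpace (X α)]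

lemma sig_preimage_interior (i : Ω) (A : Set (Σ α, X α)) :
    Sigma.mk i ⁻¹' interior A = interior (Sigma.mk i ⁻¹' A) :=
  isOpenMap_sigmaMk.preimage_interior_eq_interior_preimage continuous_sigmaMk A

lemma sig_preimage_closure (i : Ω) (A : Set (Σ α, X α)) :
    Sigma.mk i ⁻¹' closure A = closure (Sigma.mk i ⁻¹' A) :=
  isOpenMap_sigmaMk.preimage_closure_eq_closure_preimage continuous_sigmaMk A

lemma sig_subset_iff {A B : Set (Σ α, X α)} :
    A ⊆ B ↔ ∀ i, Sigma.mk i ⁻¹' A ⊆ Sigma.mk i ⁻¹' B := by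
  constructor
  · intro h i x hx; exact h hx
  · rintro h ⟨i, x⟩ hx; exact h i hx

lemma semiOpen_iff {A : Set (Σ α, X α)} :
    SemiOpen A ↔ ∀ i, SemiOpen (Sigma.mk i ⁻¹' A) := by
  unfold SemiOpen
  rw [sig_subset_iff]
  refine forall_congr' fun i => ?_
  rw [sig_preimage_closure, sig_preimage_interior]

lemma semiClosed_iff {A : Set (Σ α, X α)} :
    SemiClosed A ↔ ∀ i, SemiClosed (Sigma.mk i ⁻¹' A) := by
  unfold SemiClosed
  rw [sig_subset_iff]
  refine forall_congr' fun i => ?_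
  rw [sig_preimage_interior, sig_preimage_closure]

lemma semiOpen_empty {Y : Type*} [TopologicalSpace Y] : SemiOpen (∅ : Set Y) := by
  intro x hx; exact absurd hx (notMem_empty x)

lemma semiClosed_empty {Y : Type*} [TopologicalSpace Y] : SemiClosed (∅ : Set Y) := by
  unfold SemiClosed
  simp

lemma semiOpen_univ {Y : Type*} [TopologicalSpace Y] : SemiOpen (univ : Set Y) := by
  unfold SemiOpen
  simp

lemma semiClosed_univ {Y : Type*} [TopologicalSpace Y] : SemiClosed (univ : Set Y) := by
  intro x _; trivial

lemma semiOpen_image {i : Ω} {s : Set (X i)} (hs : SemiOpen s) :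
    SemiOpen (Sigma.mk i '' s) := by
  rw [semiOpen_iff]
  intro j
  rcases eq_or_ne i j with rfl | hne
  · rwa [preimage_image_eq _ sigma_mk_injective]
  · rw [preimage_image_sigmaMk_of_ne (Ne.symm hne)]
    exact semiOpen_empty

lemma semiClosed_image {i : Ω} {s : Set (X i)} (hs : SemiClosed s) :
    SemiClosed (Sigma.mk i '' s) := by
  rw [semiClosed_iff]
  intro j
  rcases eq_or_ne i j with rfl | hne
  · rwa [preimage_image_eq _ sigma_mk_injective]
  · rw [preimage_image_sigmaMk_of_ne (Ne.symm hne)]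
    exact semiClosed_empty

lemma sint_preimage (i : Ω) (A : Set (Σ α, X α)) :
    Sigma.mk i ⁻¹' sint A = sint (Sigma.mk i ⁻¹' A) := by
  apply Subset.antisymm
  · rintro x hx
    obtain ⟨S, ⟨hSo, hSA⟩, hxS⟩ := hx
    exact ⟨Sigma.mk i ⁻¹' S, ⟨(semiOpen_iff.1 hSo) i, preimage_mono hSA⟩, hxS⟩
  · rintro x ⟨S, ⟨hSo, hSA⟩, hxS⟩
    refine ⟨Sigma.mk i '' S, ⟨semiOpen_image hSo, ?_⟩, mem_image_of_mem _ hxS⟩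
    exact (image_subset_iff).2 hSA

lemma sgOpen_iff {A : Set (Σ α, X α)} :
    SgOpen A ↔ ∀ i, SgOpen (Sigma.mk i ⁻¹' A) := by
  constructor
  · intro h i F hF hFA
    have h1 : Sigma.mk i '' F ⊆ sint A :=
      h _ (semiClosed_image hF) ((image_subset_iff).2 hFA)
    have h2 : F ⊆ Sigma.mk i ⁻¹' sint A := by
      intro x hx; exact h1 (mem_image_of_mem _ hx)
    rwa [sint_preimage] at h2
  · intro h F hF hFA
    rw [sig_subset_iff]
    intro i
    rw [sint_preimage]
    exact h i _ ((semiClosed_iff.1 hF) i) (preimage_mono hFA)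

lemma sgOpen_empty {Y : Type*} [TopologicalSpace Y] : SgOpen (∅ : Set Y) := by
  intro F _ hF
  intro x hx
  exact absurd (hF hx) (notMem_empty _)

lemma sgOpen_univ {Y : Type*} [TopologicalSpace Y] : SgOpen (univ : Set Y) := by
  intro F _ _
  intro x _
  exact ⟨univ, ⟨semiOpen_univ, Subset.rfl⟩, trivial⟩

end Aux

section Main

variable {Ω : Type*} {X : Ω → Type*} [∀ α, TopologicalSpace (X α)]

lemma sgOpen_image' {i : Ω} {s : Set (X i)} (hs : SgOpen s) :
    SgOpen (Sigma.mk i '' s) := by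
  rw [sgOpen_iff]
  intro j
  rcases eq_or_ne i j with rfl | hne
  · rwa [preimage_image_eq _ sigma_mk_injective]
  · rw [preimage_image_sigmaMk_of_ne (Ne.symm hne)]
    exact sgOpen_empty

lemma sgOpen_range (i : Ω) : SgOpen (range (Sigma.mk i) : Set (Σ α, X α)) := by
  rw [← image_univ]
  exact sgOpen_image' sgOpen_univ

lemma sgOpen_range_compl (i : Ω) : SgOpen ((range (Sigma.mk i))ᶜ : Set (Σ α, X α)) := by
  rw [sgOpen_iff]
  intro j
  rcases eq_or_ne i j with rfl | hne
  · have : Sigma.mk i ⁻¹' (range (Sigma.mk i))ᶜ = (∅ : Set (X i)) := by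
      ext x; simp
    rw [this]; exact sgOpen_empty
  · have : Sigma.mk j ⁻¹' (range (Sigma.mk i))ᶜ = (univ : Set (X j)) := by
      ext x
      simp only [mem_preimage, mem_compl_iff, mem_range, mem_univ, iff_true]
      rintro ⟨y, hy⟩
      exact hne (congrArg Sigma.fst hy)
    rw [this]; exact sgOpen_univ

end Main


theorem stmt_17 {Ω : Type*} (X : Ω → Type*) [∀ α, TopologicalSpace (X α)]
    [∀ α, Nonempty (X α)] :
    SgCompact (Σ α, X α) ↔ (∀ α, SgCompact (X α)) ∧ Finite Ω := by
  constructor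
  · intro h
    constructor
    · -- each component sg-compact
      intro α 𝒱 h𝒱 hcov
      set 𝒰 : Set (Set (Σ β, X β)) :=
        (fun V => Sigma.mk α '' V) '' 𝒱 ∪ {(range (Sigma.mk α))ᶜ} with h𝒰def
      have h𝒰o : ∀ U ∈ 𝒰, SgOpen U := by
        rintro U (⟨V, hV, rfl⟩ | hU)
        · exact sgOpen_image' (h𝒱 V hV)
        · rw [mem_singleton_iff] at hU; subst hU
          exact sgOpen_range_compl α
      have h𝒰cov : ⋃₀ 𝒰 = univ := by
        apply eq_univ_of_forall
        rintro ⟨β, x⟩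
        rcases eq_or_ne β α with rfl | hne
        · have : x ∈ ⋃₀ 𝒱 := hcov ▸ mem_univ x
          obtain ⟨V, hV, hxV⟩ := this
          exact ⟨Sigma.mk β '' V, Or.inl ⟨V, hV, rfl⟩, mem_image_of_mem _ hxV⟩
        · refine ⟨(range (Sigma.mk α))ᶜ, Or.inr rfl, ?_⟩
          rintro ⟨y, hy⟩
          exact hne (congrArg Sigma.fst hy).symm
      obtain ⟨F, hF𝒰, hFfin, hFcov⟩ := h 𝒰 h𝒰o h𝒰cov
      set G : Set (Set (X α)) := {V ∈ 𝒱 | Sigma.mk α '' V ∈ F} with hGdef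
      refine ⟨G, fun V hV => hV.1, ?_, ?_⟩
      · apply Set.Finite.of_finite_image (f := fun V => Sigma.mk α '' V)
        · exact hFfin.subset (by rintro _ ⟨V, hV, rfl⟩; exact hV.2)
        · intro V _ W _ hVW
          exact (Set.image_injective.2 sigma_mk_injective) hVW
      · apply eq_univ_of_forall
        intro x
        have : (⟨α, x⟩ : Σ β, X β) ∈ ⋃₀ F := hFcov ▸ mem_univ _
        obtain ⟨S, hSF, hxS⟩ := this
        rcases hF𝒰 hSF with ⟨V, hV, rfl⟩ | hS
        · have hxV : x ∈ V := by
            have := hxS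
            rwa [← preimage_image_eq V (sigma_mk_injective (i := α))]
          exact ⟨V, ⟨hV, hSF⟩, hxV⟩
        · rw [mem_singleton_iff] at hS; subst hS
          exact absurd ⟨x, rfl⟩ hxS
    · -- Ω finite
      set 𝒰 : Set (Set (Σ β, X β)) := range (fun β => range (Sigma.mk β)) with h𝒰def
      have h𝒰o : ∀ U ∈ 𝒰, SgOpen U := by
        rintro U ⟨β, rfl⟩; exact sgOpen_range β
      have h𝒰cov : ⋃₀ 𝒰 = univ := by
        apply eq_univ_of_forall
        rintro ⟨β, x⟩
        exact ⟨range (Sigma.mk β), ⟨β, rfl⟩, ⟨x, rfl⟩⟩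
      obtain ⟨F, hF𝒰, hFfin, hFcov⟩ := h 𝒰 h𝒰o h𝒰cov
      have hmem : ∀ β, range (Sigma.mk β) ∈ F := by
        intro β
        obtain ⟨x⟩ := ‹∀ α, Nonempty (X α)› β
        have : (⟨β, x⟩ : Σ γ, X γ) ∈ ⋃₀ F := hFcov ▸ mem_univ _
        obtain ⟨S, hSF, hxS⟩ := this
        obtain ⟨γ, rfl⟩ := hF𝒰 hSF
        obtain ⟨y, hy⟩ := hxS
        obtain rfl : γ = β := congrArg Sigma.fst hy
        exact hSF
      haveI := hFfin.to_subtype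
      refine Finite.of_injective (fun β => (⟨range (Sigma.mk β), hmem β⟩ : F)) ?_
      intro β γ hβγ
      have h1 : range (Sigma.mk β) = (range (Sigma.mk γ) : Set (Σ δ, X δ)) :=
        congrArg Subtype.val hβγ
      obtain ⟨x⟩ := ‹∀ α, Nonempty (X α)› β
      have : (⟨β, x⟩ : Σ δ, X δ) ∈ range (Sigma.mk γ) := h1 ▸ ⟨x, rfl⟩
      obtain ⟨y, hy⟩ := this
      exact (congrArg Sigma.fst hy).symm
  · rintro ⟨hcomp, hfin⟩
    intro 𝒰 h𝒰o h𝒰cov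
    -- for each α, get a finite subfamily of 𝒰 whose slices cover X α
    have key : ∀ α, ∃ G ⊆ 𝒰, G.Finite ∧
        (⋃₀ ((fun U => Sigma.mk α ⁻¹' U) '' G)) = univ := by
      intro α
      have hVo : ∀ V ∈ (fun U => Sigma.mk α ⁻¹' U) '' 𝒰, SgOpen V := by
        rintro V ⟨U, hU, rfl⟩
        exact (sgOpen_iff.1 (h𝒰o U hU)) α
      have hVcov : ⋃₀ ((fun U => Sigma.mk α ⁻¹' U) '' 𝒰) = univ := by
        apply eq_univ_of_forall
        intro x
        have : (⟨α, x⟩ : Σ β, X β) ∈ ⋃₀ 𝒰 := h𝒰cov ▸ mem_univ _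
        obtain ⟨U, hU, hxU⟩ := this
        exact ⟨Sigma.mk α ⁻¹' U, ⟨U, hU, rfl⟩, hxU⟩
      obtain ⟨Fα, hFα, hFαfin, hFαcov⟩ := hcomp α _ hVo hVcov
      haveI := hFαfin.to_subtype
      have hchoice : ∀ S : Fα, ∃ U, U ∈ 𝒰 ∧ Sigma.mk α ⁻¹' U = S.1 := by
        rintro ⟨S, hS⟩
        obtain ⟨U, hU, hEq⟩ := hFα hS
        exact ⟨U, hU, hEq⟩
      choose u hu1 hu2 using hchoice
      refine ⟨range u, by rintro _ ⟨S, rfl⟩; exact hu1 S, Set.finite_range u, ?_⟩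
      apply eq_univ_of_forall
      intro x
      have : x ∈ ⋃₀ Fα := hFαcov ▸ mem_univ _
      obtain ⟨S, hS, hxS⟩ := this
      refine ⟨Sigma.mk α ⁻¹' u ⟨S, hS⟩, ⟨u ⟨S, hS⟩, ⟨⟨S, hS⟩, rfl⟩, rfl⟩, ?_⟩
      rw [hu2 ⟨S, hS⟩]
      exact hxS
    choose G hG1 hG2 hG3 using key
    haveI := hfin
    refine ⟨⋃ α, G α, iUnion_subset hG1, Set.finite_iUnion hG2, ?_⟩
    apply eq_univ_of_forall
    rintro ⟨α, x⟩
    have : x ∈ ⋃₀ ((fun U => Sigma.mk α ⁻¹' U) '' G α) := (hG3 α) ▸ mem_univ _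
    obtain ⟨_, ⟨U, hU, rfl⟩, hxU⟩ := this
    exact ⟨U, mem_iUnion.2 ⟨α, hU⟩, hxU⟩
end

section
/- If X is an sg-compact topological space and Y is a finite locally indiscrete topological space, then X × Y is sg-compact. -/
open Set Topology

section Aux

variable {X Y : Type*} [TopologicalSpace X] [TopologicalSpace Y]

def Slice (A : Set (X × Y)) (y : Y) : Set X := {x | (x, y) ∈ A}

lemma open_subset_sint {A U : Set X} (hU : IsOpen U) (hUA : U ⊆ A) : U ⊆ sint A := by
  intro x hx
  exact ⟨U, ⟨fun z hz => subset_closure (by rwa [hU.interior_eq]), hUA⟩, hx⟩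

def Atom (y : Y) : Set Y := ⋂₀ {W | IsOpen W ∧ y ∈ W}

lemma mem_atom_self (y : Y) : y ∈ Atom y := fun W hW => hW.2

lemma atom_subset {y : Y} {W : Set Y} (hW : IsOpen W) (hy : y ∈ W) : Atom y ⊆ W :=
  sInter_subset_of_mem ⟨hW, hy⟩

lemma isOpen_atom [Finite Y] (y : Y) : IsOpen (Atom y) := by
  apply Set.Finite.isOpen_sInter (Set.toFinite _)
  exact fun W hW => hW.1

lemma mem_open_of_mem_atom (hYli : LocallyIndiscrete Y) {y z : Y} (hz : z ∈ Atom y)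
    {W : Set Y} (hW : IsOpen W) (hzW : z ∈ W) : y ∈ W := by
  by_contra hy
  have hWc : IsOpen Wᶜ := (hYli W hW).isOpen_compl
  exact atom_subset hWc hy hz hzW

lemma slice_interior_subset (A : Set (X × Y)) (y : Y) :
    Slice (interior A) y ⊆ interior (Slice A y) := by
  have hcont : Continuous (fun x : X => (x, y)) := continuous_id.prodMk continuous_const
  have hopen : IsOpen (Slice (interior A) y) := isOpen_interior.preimage hcont
  exact interior_maximal (fun x hx => (show (x, y) ∈ A from interior_subset hx)) hopen

lemma slice_closure_subset [Finite Y] (hYli : LocallyIndiscrete Y)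
    {O : Set (X × Y)} (hO : IsOpen O) (y : Y) :
    Slice (closure O) y ⊆ closure (Slice O y) := by
  intro x hx
  rw [mem_closure_iff]
  intro U hU hxU
  have hnb : IsOpen (U ×ˢ Atom y) := hU.prod (isOpen_atom y)
  have hmem : (x, y) ∈ U ×ˢ Atom y := ⟨hxU, mem_atom_self y⟩
  have := (mem_closure_iff.mp hx) _ hnb hmem
  obtain ⟨⟨x', y'⟩, ⟨hx'U, hy'⟩, hO'⟩ := this
  obtain ⟨U', W, hU', hW, hx'U', hy'W, hsub⟩ := isOpen_prod_iff.mp hO x' y' hO'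
  have hyW : y ∈ W := mem_open_of_mem_atom hYli hy' hW hy'W
  exact ⟨x', hx'U, hsub ⟨hx'U', hyW⟩⟩

lemma closure_singleton_eq_atom [Finite Y] (hYli : LocallyIndiscrete Y) (y : Y) :
    closure ({y} : Set Y) = Atom y := by
  apply Subset.antisymm
  · exact closure_minimal (singleton_subset_iff.mpr (mem_atom_self y))
      (hYli _ (isOpen_atom y))
  · intro z hz
    rw [mem_closure_iff]
    intro W hW hzW
    exact ⟨y, mem_open_of_mem_atom hYli hz hW hzW, rfl⟩

lemma semiClosed_nd_prod [Finite Y] (hYli : LocallyIndiscrete Y)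
    {N : Set X} (hN : interior (closure N) = ∅) (y : Y) :
    SemiClosed (N ×ˢ ({y} : Set Y)) := by
  intro p hp
  rw [closure_prod_eq, interior_prod_eq, hN, Set.empty_prod] at hp
  exact absurd hp (notMem_empty p)

lemma sgOpen_slice [Finite Y] (hYli : LocallyIndiscrete Y)
    {A : Set (X × Y)} (hA : SgOpen A) (y : Y) : SgOpen (Slice A y) := by
  intro F hF hFA
  set G := interior (closure F) with hGdef
  have hGF : G ⊆ F := hF
  have hGs : G ⊆ sint (Slice A y) := open_subset_sint isOpen_interior (hGF.trans hFA)
  set N := F \ G with hNdef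
  have hNnd : interior (closure N) = ∅ := by
    have h1 : closure N ⊆ Gᶜ := by
      apply closure_minimal _ (isOpen_interior.isClosed_compl)
      exact fun z hz => hz.2
    have h2 : interior (closure N) ⊆ G :=
      interior_mono (closure_mono diff_subset)
    apply eq_empty_of_subset_empty
    intro z hz
    exact (h1 (interior_subset hz)) (h2 hz)
  have hNprod : SemiClosed (N ×ˢ ({y} : Set Y)) := semiClosed_nd_prod hYli hNnd y
  have hNsub : N ×ˢ ({y} : Set Y) ⊆ A := by
    rintro ⟨x, y'⟩ ⟨hx, hy'⟩
    rcases hy' with rfl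
    exact hFA hx.1
  have hNs := hA _ hNprod hNsub
  intro x hxF
  by_cases hxG : x ∈ G
  · exact hGs hxG
  · have hxN : x ∈ N := ⟨hxF, hxG⟩
    obtain ⟨S, ⟨hSso, hSA⟩, hxS⟩ := hNs (show (x, y) ∈ N ×ˢ ({y} : Set Y) from ⟨hxN, rfl⟩)
    refine ⟨Slice S y, ⟨?_, fun z hz => hSA hz⟩, hxS⟩
    intro z hz
    have h1 : (z, y) ∈ closure (interior S) := hSso hz
    have h2 : z ∈ closure (Slice (interior S) y) :=
      slice_closure_subset hYli isOpen_interior y h1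
    exact closure_mono (slice_interior_subset S y) h2

end Aux

theorem stmt_19 {X Y : Type*} [TopologicalSpace X] [TopologicalSpace Y]
    (hX : SgCompact X) (hY : Finite Y) (hYli : LocallyIndiscrete Y) :
    SgCompact (X × Y) := by
  intro 𝒰 h𝒰 hcov
  have key : ∀ y : Y, ∃ F ⊆ 𝒰, F.Finite ∧ ∀ x : X, ∃ A ∈ F, (x, y) ∈ A := by
    intro y
    have hcovy : ⋃₀ ((fun A => Slice A y) '' 𝒰) = Set.univ := by
      apply eq_univ_of_forall
      intro x
      have hx : (x, y) ∈ ⋃₀ 𝒰 := hcov ▸ mem_univ (x, y)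
      obtain ⟨A, hA, hxA⟩ := hx
      exact ⟨Slice A y, ⟨A, hA, rfl⟩, hxA⟩
    have hso : ∀ B ∈ (fun A => Slice A y) '' 𝒰, SgOpen B := by
      rintro B ⟨A, hA, rfl⟩
      exact sgOpen_slice hYli (h𝒰 A hA) y
    obtain ⟨G, hG, hGfin, hGcov⟩ := hX _ hso hcovy
    have hchoice : ∀ B : Set X, ∃ A : Set (X × Y), B ∈ G → A ∈ 𝒰 ∧ Slice A y = B := by
      intro B
      by_cases hB : B ∈ G
      · obtain ⟨A, hA, hAB⟩ := hG hB
        exact ⟨A, fun _ => ⟨hA, hAB⟩⟩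
      · exact ⟨∅, fun h => absurd h hB⟩
    choose g hg using hchoice
    refine ⟨g '' G, ?_, hGfin.image g, ?_⟩
    · rintro A ⟨B, hB, rfl⟩
      exact (hg B hB).1
    · intro x
      have hx : x ∈ ⋃₀ G := hGcov ▸ mem_univ x
      obtain ⟨B, hB, hxB⟩ := hx
      refine ⟨g B, ⟨B, hB, rfl⟩, ?_⟩
      have := (hg B hB).2
      rw [← this] at hxB
      exact hxB
  choose 𝔽 h1 h2 h3 using key
  refine ⟨⋃ y, 𝔽 y, iUnion_subset h1, Set.finite_iUnion h2, ?_⟩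
  apply eq_univ_of_forall
  rintro ⟨x, y⟩
  obtain ⟨A, hA, hxA⟩ := h3 y x
  exact ⟨A, mem_iUnion.mpr ⟨y, hA⟩, hxA⟩
end
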